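/- Let G be a finite simple graph, let (i,j) ∈ E be a weak edge of G, and let γ ≥ 1. If R is a γ-optimal vertex cover of the reduced graph G^{(i,j)}, then R* (defined as R ∪ Δ_ij ∪ {j} if D_i ⊆ R, and R ∪ Δ_ij ∪ {i} otherwise) is a γ-optimal vertex cover of G. -/

import Mathlib

variable {V : Type*} [Fintype V] [DecidableEq V]

/-- `S` is a vertex cover of `G`: every edge has at least one endpoint in `S`. -/
def IsVertexCover (G : SimpleGraph V) (S : Finset V) : Prop :=
  ∀ ⦃a b : V⦄, G.Adj a b → a ∈ S ∨ b ∈ S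

/-- `Δ_ij`: the common neighbours of `i` and `j`. -/
def DeltaSet (G : SimpleGraph V) [DecidableRel G.Adj] (i j : V) : Finset V :=
  Finset.univ.filter fun k => G.Adj i k ∧ G.Adj j k

/-- `D_i`: the neighbours of `i` other than `j` that are not common neighbours
of `i` and `j`.  (`D_j` is `DSide G j i`.) -/
def DSide (G : SimpleGraph V) [DecidableRel G.Adj] (i j : V) : Finset V :=
  Finset.univ.filter fun s => G.Adj i s ∧ s ≠ j ∧ s ∉ DeltaSet G i j

/-- The removed vertex set `{i, j} ∪ Δ_ij`. -/
def RemovedSet (G : SimpleGraph V) [DecidableRel G.Adj] (i j : V) : Finset V :=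
  insert i (insert j (DeltaSet G i j))

/-- The reduced graph `G^{(i,j)}`: vertices outside `{i,j} ∪ Δ_ij`, with the edges of
`G` between such vertices together with all pairs `(s,t)`, `s ∈ D_i`, `t ∈ D_j`. -/
def ReducedGraph (G : SimpleGraph V) [DecidableRel G.Adj] (i j : V) : SimpleGraph V :=
  SimpleGraph.fromRel fun a b =>
    a ∉ RemovedSet G i j ∧ b ∉ RemovedSet G i j ∧
      (G.Adj a b ∨ (a ∈ DSide G i j ∧ b ∈ DSide G j i))

/-- `R` is a vertex cover of the reduced graph `G^{(i,j)}`: it is a subset of the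
vertex set of `G^{(i,j)}` and covers all its edges. -/
def IsReducedVC (G : SimpleGraph V) [DecidableRel G.Adj] (i j : V) (R : Finset V) :
    Prop :=
  (∀ v ∈ R, v ∉ RemovedSet G i j) ∧
    ∀ ⦃a b : V⦄, (ReducedGraph G i j).Adj a b → a ∈ R ∨ b ∈ R

/-- `R* = R ∪ Δ_ij ∪ {j}` if `D_i ⊆ R`, and `R* = R ∪ Δ_ij ∪ {i}` otherwise. -/
def RStar (G : SimpleGraph V) [DecidableRel G.Adj] (i j : V) (R : Finset V) :
    Finset V :=
  if DSide G i j ⊆ R then R ∪ DeltaSet G i j ∪ {j} else R ∪ DeltaSet G i j ∪ {i}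

/-- `S` is an optimal vertex cover of `G`: a vertex cover of minimum cardinality. -/
def IsOptimalVertexCover (G : SimpleGraph V) (S : Finset V) : Prop :=
  IsVertexCover G S ∧ ∀ T : Finset V, IsVertexCover G T → S.card ≤ T.card

/-!
Every edge of `G` lies in `G^{(i,j)}`, meets `Δ_ij`, or is incident to `i` or `j`. If `D_i ⊆ R`,
the edges at `i` are covered by `R` and those at `j` by `j`; otherwise some `s ∈ D_i \ R` forces
`D_j ⊆ R` through the edges `{s} × D_j` of `G^{(i,j)}`, and `i` covers the rest. So `R*` is a
cover of size `|R| + |Δ_ij| + 1`.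

Conversely, an optimal cover `V⁰` containing `i` but not `j` contains all neighbours of `j`,
hence `Δ_ij` and `D_j`, so `V⁰ \ ({i} ∪ Δ_ij)` covers `G^{(i,j)}`. Thus
`opt(G^{(i,j)}) + |Δ_ij| + 1 ≤ opt(G)`, and `γ ≥ 1` lets the additive `|Δ_ij| + 1` be absorbed.
-/

section ReducedGraph

variable {G : SimpleGraph V} [DecidableRel G.Adj] {i j : V}

omit [DecidableEq V] in
@[simp]
lemma mem_deltaSet {k : V} : k ∈ DeltaSet G i j ↔ G.Adj i k ∧ G.Adj j k := by
  simp [DeltaSet]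

@[simp]
lemma mem_dSide {s : V} : s ∈ DSide G i j ↔ G.Adj i s ∧ s ≠ j ∧ s ∉ DeltaSet G i j := by
  simp [DSide]

@[simp]
lemma mem_removedSet {v : V} : v ∈ RemovedSet G i j ↔ v = i ∨ v = j ∨ v ∈ DeltaSet G i j := by
  simp [RemovedSet]

omit [DecidableEq V] in
lemma deltaSet_comm : DeltaSet G j i = DeltaSet G i j := by
  ext k
  simp [and_comm]

lemma removedSet_comm : RemovedSet G j i = RemovedSet G i j := by
  ext v
  simp only [mem_removedSet, deltaSet_comm]
  tauto

lemma reducedGraph_comm : ReducedGraph G j i = ReducedGraph G i j := by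
  ext a b
  simp only [ReducedGraph, SimpleGraph.fromRel_adj, removedSet_comm]
  constructor <;> rintro ⟨hne, h⟩ <;> refine ⟨hne, ?_⟩ <;>
    rcases h with ⟨ha, hb, hab | ⟨haD, hbD⟩⟩ | ⟨hb, ha, hab | ⟨hbD, haD⟩⟩ <;> tauto

lemma isReducedVC_comm {R : Finset V} : IsReducedVC G j i R ↔ IsReducedVC G i j R := by
  simp only [IsReducedVC, removedSet_comm, reducedGraph_comm]

omit [DecidableEq V] in
lemma left_notMem_deltaSet : i ∉ DeltaSet G i j := fun h => G.irrefl (mem_deltaSet.1 h).1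

omit [DecidableEq V] in
lemma right_notMem_deltaSet : j ∉ DeltaSet G i j := fun h => G.irrefl (mem_deltaSet.1 h).2

lemma notMem_removedSet_of_reducedGraph_adj {a b : V} (h : (ReducedGraph G i j).Adj a b) :
    a ∉ RemovedSet G i j ∧ b ∉ RemovedSet G i j := by
  rw [ReducedGraph, SimpleGraph.fromRel_adj] at h
  rcases h.2 with ⟨ha, hb, _⟩ | ⟨hb, ha, _⟩ <;> exact ⟨ha, hb⟩

lemma reducedGraph_adj_of_adj {a b : V} (h : G.Adj a b) (ha : a ∉ RemovedSet G i j)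
    (hb : b ∉ RemovedSet G i j) : (ReducedGraph G i j).Adj a b := by
  rw [ReducedGraph, SimpleGraph.fromRel_adj]
  exact ⟨h.ne, Or.inl ⟨ha, hb, Or.inl h⟩⟩

lemma reducedGraph_adj_of_mem_dSide {s t : V} (hs : s ∈ DSide G i j) (ht : t ∈ DSide G j i) :
    (ReducedGraph G i j).Adj s t := by
  rw [mem_dSide] at hs ht
  have hsi : s ≠ i := fun h => G.irrefl (h ▸ hs.1)
  have hti : t ≠ j := fun h => G.irrefl (h ▸ ht.1)
  have hst : s ≠ t := by
    rintro rfl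
    exact hs.2.2 (mem_deltaSet.2 ⟨hs.1, ht.1⟩)
  rw [ReducedGraph, SimpleGraph.fromRel_adj]
  refine ⟨hst, Or.inl ⟨?_, ?_, Or.inr ⟨?_, ?_⟩⟩⟩
  · simp only [mem_removedSet]
    tauto
  · simp only [mem_removedSet, ← deltaSet_comm (i := i)]
    tauto
  · simpa using hs
  · simpa using ht

end ReducedGraph

section RStar

variable {G : SimpleGraph V} [DecidableRel G.Adj] {i j : V} {R S : Finset V}

lemma IsReducedVC.dSide_subset_of_notMem (hR : IsReducedVC G i j R) {s : V}
    (hs : s ∈ DSide G i j) (hsR : s ∉ R) : DSide G j i ⊆ R :=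
  fun _ ht => (hR.2 (reducedGraph_adj_of_mem_dSide hs ht)).resolve_left hsR

lemma mem_or_mem_of_adj_left (hΔ : DeltaSet G i j ⊆ S) (hi : i ∈ S ∨ DSide G i j ⊆ S)
    (hij : i ∈ S ∨ j ∈ S) {b : V} (h : G.Adj i b) : i ∈ S ∨ b ∈ S := by
  by_cases hiS : i ∈ S
  · exact Or.inl hiS
  right
  by_cases hbj : b = j
  · exact hbj ▸ hij.resolve_left hiS
  by_cases hbΔ : b ∈ DeltaSet G i j
  · exact hΔ hbΔ
  exact hi.resolve_left hiS (mem_dSide.2 ⟨h, hbj, hbΔ⟩)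

lemma IsReducedVC.isVertexCover_of_subset (hR : IsReducedVC G i j R) (hRS : R ⊆ S)
    (hΔ : DeltaSet G i j ⊆ S) (hi : i ∈ S ∨ DSide G i j ⊆ S) (hj : j ∈ S ∨ DSide G j i ⊆ S)
    (hij : i ∈ S ∨ j ∈ S) : IsVertexCover G S := by
  have edge_at_removed {a b : V} (h : G.Adj a b) (ha : a ∈ RemovedSet G i j) :
      a ∈ S ∨ b ∈ S := by
    rcases mem_removedSet.1 ha with rfl | rfl | haΔ
    · exact mem_or_mem_of_adj_left hΔ hi hij h
    · exact mem_or_mem_of_adj_left (deltaSet_comm (G := G) ▸ hΔ) hj hij.symm h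
    · exact Or.inl (hΔ haΔ)
  intro a b h
  by_cases ha : a ∈ RemovedSet G i j
  · exact edge_at_removed h ha
  by_cases hb : b ∈ RemovedSet G i j
  · exact (edge_at_removed h.symm hb).symm
  exact (hR.2 (reducedGraph_adj_of_adj h ha hb)).imp (@hRS _) (@hRS _)

lemma IsReducedVC.isVertexCover_rStar (hR : IsReducedVC G i j R) :
    IsVertexCover G (RStar G i j R) := by
  have hR_sub (x : V) : R ⊆ R ∪ DeltaSet G i j ∪ {x} :=
    Finset.subset_union_left.trans Finset.subset_union_left
  have hΔ_sub (x : V) : DeltaSet G i j ⊆ R ∪ DeltaSet G i j ∪ {x} :=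
    Finset.subset_union_right.trans Finset.subset_union_left
  have hx_mem (x : V) : x ∈ R ∪ DeltaSet G i j ∪ {x} := by simp
  unfold RStar
  split_ifs with hD
  · exact hR.isVertexCover_of_subset (hR_sub j) (hΔ_sub j) (Or.inr (hD.trans (hR_sub j)))
      (Or.inl (hx_mem j)) (Or.inr (hx_mem j))
  · obtain ⟨s, hs, hsR⟩ := Finset.not_subset.1 hD
    exact hR.isVertexCover_of_subset (hR_sub i) (hΔ_sub i) (Or.inl (hx_mem i))
      (Or.inr ((hR.dSide_subset_of_notMem hs hsR).trans (hR_sub i))) (Or.inl (hx_mem i))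

lemma card_rStar (hR : ∀ v ∈ R, v ∉ RemovedSet G i j) :
    (RStar G i j R).card = R.card + (DeltaSet G i j).card + 1 := by
  have hRΔ : Disjoint R (DeltaSet G i j) :=
    Finset.disjoint_left.2 fun v hv hvΔ => hR v hv (mem_removedSet.2 (Or.inr (Or.inr hvΔ)))
  have card_add_removed (x : V) (hx : x ∈ RemovedSet G i j) (hxΔ : x ∉ DeltaSet G i j) :
      (R ∪ DeltaSet G i j ∪ {x}).card = R.card + (DeltaSet G i j).card + 1 := by
    have hxR : x ∉ R := fun h => hR x h hx
    rw [Finset.card_union_of_disjoint (by simp [hxR, hxΔ]),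
      Finset.card_union_of_disjoint hRΔ, Finset.card_singleton]
  unfold RStar
  split_ifs
  exacts [card_add_removed j (by simp) right_notMem_deltaSet,
    card_add_removed i (by simp) left_notMem_deltaSet]

lemma exists_isReducedVC_card_le :
    ∃ T, IsReducedVC G i j T ∧ ∀ T', IsReducedVC G i j T' → T.card ≤ T'.card := by
  have hcompl : IsReducedVC G i j (RemovedSet G i j)ᶜ :=
    ⟨fun v hv => Finset.mem_compl.1 hv,
      fun a b h => Or.inl (Finset.mem_compl.2 (notMem_removedSet_of_reducedGraph_adj h).1)⟩
  obtain ⟨T, hT, hmin⟩ := (measure Finset.card).wf.has_min {T | IsReducedVC G i j T} ⟨_, hcompl⟩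
  exact ⟨T, hT, fun T' hT' => not_lt.1 (hmin T' hT')⟩

end RStar

section WeakEdge

variable {G : SimpleGraph V} [DecidableRel G.Adj] {i j : V} {S : Finset V}

omit [Fintype V] in
lemma xor_mem_of_card_pair_inter_eq_one (hne : i ≠ j) (h : ({i, j} ∩ S).card = 1) :
    Xor (i ∈ S) (j ∈ S) := by
  by_cases hi : i ∈ S <;> by_cases hj : j ∈ S <;>
    simp_all [xor_def, Finset.insert_inter_of_mem, Finset.insert_inter_of_notMem,
      Finset.card_pair hne]

/-- The new edges `D_i × D_j` are covered because `D_j ⊆ N(j) ⊆ S`. -/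
lemma IsVertexCover.isReducedVC_sdiff (hS : IsVertexCover G S) (hj : j ∉ S) :
    IsReducedVC G i j (S \ insert i (DeltaSet G i j)) := by
  have hDj : DSide G j i ⊆ S := fun t ht => (hS (mem_dSide.1 ht).1).resolve_left hj
  have mem_sdiff_of_mem (v : V) (hv : v ∉ RemovedSet G i j) (hvS : v ∈ S) :
      v ∈ S \ insert i (DeltaSet G i j) := by
    simp only [mem_removedSet, not_or] at hv
    simp [hvS, hv.1, hv.2.2]
  refine ⟨fun v hv => ?_, fun a b h => ?_⟩
  · simp only [Finset.mem_sdiff, Finset.mem_insert, not_or] at hv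
    simp only [mem_removedSet, not_or]
    exact ⟨hv.2.1, fun h => hj (h ▸ hv.1), hv.2.2⟩
  · obtain ⟨ha, hb⟩ := notMem_removedSet_of_reducedGraph_adj h
    rw [ReducedGraph, SimpleGraph.fromRel_adj] at h
    have hab : a ∈ S ∨ b ∈ S := by
      rcases h.2 with ⟨-, -, hab | ⟨-, hbD⟩⟩ | ⟨-, -, hab | ⟨-, haD⟩⟩
      · exact hS hab
      · exact Or.inr (hDj hbD)
      · exact (hS hab).symm
      · exact Or.inl (hDj haD)
    exact hab.imp (mem_sdiff_of_mem a ha) (mem_sdiff_of_mem b hb)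

lemma IsVertexCover.card_sdiff_insert_deltaSet (hS : IsVertexCover G S) (hi : i ∈ S)
    (hj : j ∉ S) :
    (S \ insert i (DeltaSet G i j)).card + ((DeltaSet G i j).card + 1) = S.card := by
  have hsub : insert i (DeltaSet G i j) ⊆ S :=
    Finset.insert_subset hi fun k hk => (hS (mem_deltaSet.1 hk).2).resolve_left hj
  rw [Finset.card_sdiff_of_subset hsub, ← Finset.card_insert_of_notMem left_notMem_deltaSet]
  exact Nat.sub_add_cancel (Finset.card_le_card hsub)

lemma IsVertexCover.exists_isReducedVC_of_card_inter_eq_one (hS : IsVertexCover G S)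
    (hij : G.Adj i j) (h : ({i, j} ∩ S).card = 1) :
    ∃ T, IsReducedVC G i j T ∧ T.card + ((DeltaSet G i j).card + 1) = S.card := by
  rcases xor_mem_of_card_pair_inter_eq_one hij.ne h with ⟨hi, hj⟩ | ⟨hj, hi⟩
  · exact ⟨_, hS.isReducedVC_sdiff hj, hS.card_sdiff_insert_deltaSet hi hj⟩
  · refine ⟨_, isReducedVC_comm.1 (hS.isReducedVC_sdiff (i := j) hi), ?_⟩
    simpa only [deltaSet_comm (i := i) (j := j)] using hS.card_sdiff_insert_deltaSet hj hi

end WeakEdge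

/-- If `(i,j)` is a weak edge of `G`, `γ ≥ 1`, and `R` is a `γ`-optimal vertex cover
of the reduced graph `G^{(i,j)}` (a cover whose size is at most `γ` times that of any
optimal cover of `G^{(i,j)}`), then `R*` is a `γ`-optimal vertex cover of `G`. -/
theorem rstar_gamma_optimal_of_weak (G : SimpleGraph V) [DecidableRel G.Adj]
    (i j : V) (hij : G.Adj i j)
    (hweak : ∃ V0 : Finset V, IsOptimalVertexCover G V0 ∧
      (({i, j} : Finset V) ∩ V0).card = 1)
    (γ : ℝ) (hγ : 1 ≤ γ) (R : Finset V) (hR : IsReducedVC G i j R)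
    (hRγ : ∀ T : Finset V, IsReducedVC G i j T →
      (∀ T' : Finset V, IsReducedVC G i j T' → T.card ≤ T'.card) →
      (R.card : ℝ) ≤ γ * T.card) :
    IsVertexCover G (RStar G i j R) ∧
      ∀ S0 : Finset V, IsOptimalVertexCover G S0 →
        ((RStar G i j R).card : ℝ) ≤ γ * S0.card := by
  refine ⟨hR.isVertexCover_rStar, fun S0 hS0 => ?_⟩
  obtain ⟨V0, hV0, hV0i⟩ := hweak
  obtain ⟨T0, hT0, hT0card⟩ := hV0.1.exists_isReducedVC_of_card_inter_eq_one hij hV0i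
  obtain ⟨T, hT, hTmin⟩ := exists_isReducedVC_card_le (G := G) (i := i) (j := j)
  have hRT : (R.card : ℝ) ≤ γ * T.card := hRγ T hT hTmin
  have hTT0 : (T.card : ℝ) ≤ T0.card := by exact_mod_cast hTmin T0 hT0
  have hT0V0 : (T0.card : ℝ) + ((DeltaSet G i j).card + 1) = V0.card := by
    exact_mod_cast hT0card
  have hV0S0 : (V0.card : ℝ) ≤ S0.card := by exact_mod_cast hV0.2 S0 hS0.1
  rw [card_rStar hR.1]
  push_cast
  calc (R.card : ℝ) + (DeltaSet G i j).card + 1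
      ≤ γ * T0.card + γ * ((DeltaSet G i j).card + 1) := by nlinarith
    _ = γ * V0.card := by rw [← mul_add, hT0V0]
    _ ≤ γ * S0.card := by gcongr
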